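/- arXiv:2306.11381 — 4 statements merged into one kernel-verified Lean document; each statement's English description precedes it below -/
import Mathlib

section
/- The M-Wright function of order 1/2 is a Gaussian: M_{1/2}(z) := W(-1/2, 1/2 | -z) = e^{-z²/4}/√π for all real z. -/
set_option autoImplicit false

/-!
Only the even terms survive: for odd `k = 2m + 1` the Gamma argument is the pole `-m`, where
Mathlib's `Gamma` is `0`, so the term is `x / 0 = 0`, matching the convention `1/Γ(-m) = 0`.
For `k = 2m`, iterating `Γ(s + 1) = s Γ(s)` down from `Γ(1/2) = √π` gives
`Γ(1/2 - m) = (-4)^m m! √π / (2m)!`, so the term is `(-z²/4)^m / (m! √π)`: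
the exponential series of `-z²/4`, divided by `√π`.
-/

open Real Nat

theorem Real.Gamma_one_half_sub_nat (m : ℕ) :
    Gamma (1 / 2 - m) = (-4) ^ m * m ! * √π / (2 * m)! := by
  induction m with
  | zero => simpa using Gamma_one_half_eq
  | succ m ih =>
    have hrec : Gamma (1 / 2 - (m + 1 : ℕ)) = -2 * Gamma (1 / 2 - m) / (2 * m + 1) := by
      have hm : (-1 / 2 - m : ℝ) ≠ 0 := by
        have := m.cast_nonneg (α := ℝ)
        linarith
      have hshift : 1 / 2 - ((m + 1 : ℕ) : ℝ) = -1 / 2 - m := by push_cast; ring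
      have hnext : (1 / 2 - m : ℝ) = (-1 / 2 - m) + 1 := by ring
      rw [hshift, hnext, Gamma_add_one hm]
      field_simp
      ring
    rw [hrec, ih, Nat.mul_add_one 2 m, factorial_succ, factorial_succ, factorial_succ]
    field_simp
    push_cast
    ring

noncomputable def mwrightHalfTerm (z : ℝ) (k : ℕ) : ℝ :=
  (-z) ^ k / ((k ! : ℝ) * Gamma (-(1 / 2) * k + 1 / 2))

lemma mwrightHalfTerm_two_mul_add_one (z : ℝ) (m : ℕ) :
    mwrightHalfTerm z (2 * m + 1) = 0 := by
  have hpole : -(1 / 2) * ((2 * m + 1 : ℕ) : ℝ) + 1 / 2 = -m := by push_cast; ring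
  rw [mwrightHalfTerm, hpole, Gamma_neg_nat_eq_zero, mul_zero, div_zero]

lemma mwrightHalfTerm_two_mul (z : ℝ) (m : ℕ) :
    mwrightHalfTerm z (2 * m) = (-(z ^ 2 / 4)) ^ m / m ! / √π := by
  have harg : -(1 / 2) * ((2 * m : ℕ) : ℝ) + 1 / 2 = 1 / 2 - m := by push_cast; ring
  rw [mwrightHalfTerm, harg, Gamma_one_half_sub_nat, pow_mul, neg_sq, ← div_neg, div_pow]
  have hsqrt_pi : 0 < √π := sqrt_pos.2 pi_pos
  field_simp

lemma hasSum_mwrightHalfTerm (z : ℝ) :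
    HasSum (mwrightHalfTerm z) (exp (-z ^ 2 / 4) / √π) := by
  have hodd : ∀ k ∉ Set.range (2 * · : ℕ → ℕ), mwrightHalfTerm z k = 0 := by
    intro k hk
    obtain ⟨m, rfl | rfl⟩ := Nat.even_or_odd' k
    · exact absurd ⟨m, rfl⟩ hk
    · exact mwrightHalfTerm_two_mul_add_one z m
  rw [← (mul_right_injective₀ two_ne_zero).hasSum_iff hodd]
  simp only [Function.comp_def, mwrightHalfTerm_two_mul]
  simpa [Real.exp_eq_exp_ℝ, neg_div] using
    (NormedSpace.expSeries_div_hasSum_exp (-(z ^ 2 / 4))).div_const √π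

/-- The M-Wright function of order `1/2` is a Gaussian:
`M_{1/2}(z) = W(-1/2, 1/2 | -z) = e^{-z²/4}/√π` for all real `z`. -/
theorem mwright_half_eq_gaussian (z : ℝ) :
    (∑' k : ℕ, (-z) ^ k /
        ((k.factorial : ℝ) * Real.Gamma (-(1 / 2) * k + 1 / 2)))
      = Real.exp (-z ^ 2 / 4) / Real.sqrt Real.pi :=
  (hasSum_mwrightHalfTerm z).tsum_eq
end

section
/- For natural numbers n ≥ 1 and m ≥ 1, the Wright function W(-n, m | z) is a polynomial in z; explicitly, W(-n, m | z) = (1/Γ(m)) · (d/dξ)^{m-1}[e^{ξ + zξⁿ}] evaluated at ξ = 0, i.e. the residue at ξ = 0 of e^{ξ + zξⁿ}/ξ^m. -/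
set_option autoImplicit false

/-!
Differentiating `p(ξ) e^{f(ξ)}` gives `(p' + p f') e^{f(ξ)}`, so the `k`-th derivative of
`e^{ξ + zξⁿ}` is `P_k(ξ) e^{ξ + zξⁿ}` for a polynomial `P_k` obtained by iterating `p ↦ p' + p f'`.
Carrying out this iteration over `ℂ[z]` instead of `ℂ` shows that the coefficients of `P_k` are
polynomials in `z`; at `ξ = 0` the exponential factor is `1` because `n ≥ 1`.
-/

open Polynomial

namespace Polynomial

variable {R S : Type*} [CommSemiring R] [CommSemiring S]

/-- `d/dξ (p e^f) = (expDerivative f p) e^f`. -/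
noncomputable def expDerivative (f p : R[X]) : R[X] :=
  derivative p + p * derivative f

theorem map_expDerivative (φ : R →+* S) (f p : R[X]) :
    (expDerivative f p).map φ = expDerivative (f.map φ) (p.map φ) := by
  simp only [expDerivative, Polynomial.map_add, Polynomial.map_mul, derivative_map]

theorem map_iterate_expDerivative (φ : R →+* S) (f p : R[X]) (k : ℕ) :
    ((expDerivative f)^[k] p).map φ = (expDerivative (f.map φ))^[k] (p.map φ) := by
  induction k generalizing p with
  | zero => rfl
  | succ k ih => rw [Function.iterate_succ_apply, Function.iterate_succ_apply, ih,
      map_expDerivative]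

end Polynomial

theorem hasDerivAt_eval_mul_cexp (f p : ℂ[X]) (x : ℂ) :
    HasDerivAt (fun ξ => p.eval ξ * Complex.exp (f.eval ξ))
      ((expDerivative f p).eval x * Complex.exp (f.eval x)) x := by
  refine ((p.hasDerivAt x).fun_mul (f.hasDerivAt x).cexp).congr_deriv ?_
  simp only [expDerivative, eval_add, eval_mul]
  ring

theorem iteratedDeriv_eval_mul_cexp (f p : ℂ[X]) (k : ℕ) :
    iteratedDeriv k (fun ξ => p.eval ξ * Complex.exp (f.eval ξ))
      = fun ξ => ((expDerivative f)^[k] p).eval ξ * Complex.exp (f.eval ξ) := by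
  induction k generalizing p with
  | zero => rfl
  | succ k ih =>
    have hderiv := funext fun x => (hasDerivAt_eval_mul_cexp f p x).deriv
    rw [iteratedDeriv_succ', hderiv, ih, Function.iterate_succ_apply]

theorem wright_neg_int_polynomial_general (n m : ℕ) (hn : 1 ≤ n) :
    ∃ p : Polynomial ℂ, ∀ z : ℂ,
      (Complex.Gamma (m : ℂ))⁻¹ *
        iteratedDeriv (m - 1) (fun ξ : ℂ => Complex.exp (ξ + z * ξ ^ n)) 0
      = p.eval z := by
  -- the exponent `ξ + z ξⁿ` as a polynomial in `ξ` with coefficients in `ℂ[z]`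
  set F : ℂ[X][X] := X + C X * X ^ n
  refine ⟨C (Complex.Gamma m)⁻¹ * ((expDerivative F)^[m - 1] 1).eval 0, fun z => ?_⟩
  have hF : ∀ ξ : ℂ, ξ + z * ξ ^ n = (F.map (evalRingHom z)).eval ξ := fun ξ => by
    simp [F]
  have hexp : (fun ξ : ℂ => Complex.exp (ξ + z * ξ ^ n))
      = fun ξ => (1 : ℂ[X]).eval ξ * Complex.exp ((F.map (evalRingHom z)).eval ξ) := by
    simp only [hF, eval_one, one_mul]
  rw [hexp, iteratedDeriv_eval_mul_cexp]
  beta_reduce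
  rw [← hF, ← Polynomial.map_one (evalRingHom z),
    ← map_iterate_expDerivative, eval_zero_map, zero_pow (by omega)]
  simp

/-- For natural numbers `n ≥ 1` and `m ≥ 1`, the Wright function `W(-n, m | z)`,
extended via the residue at `ξ = 0` of `e^{ξ + zξⁿ}/ξ^m`, i.e.
`(1/Γ(m)) (d/dξ)^{m-1} e^{ξ + zξⁿ} |_{ξ=0}`, is a polynomial in `z`. -/
theorem wright_neg_int_polynomial (n m : ℕ) (hn : 1 ≤ n) (hm : 1 ≤ m) :
    ∃ p : Polynomial ℂ, ∀ z : ℂ,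
      (Complex.Gamma (m : ℂ))⁻¹ *
        iteratedDeriv (m - 1) (fun ξ : ℂ => Complex.exp (ξ + z * ξ ^ n)) 0
      = p.eval z :=
  wright_neg_int_polynomial_general n m hn
end

section
/- The n-th derivative of the normalized Gaussian is a Wright function: for every natural number n and real x, (d/dx)ⁿ [e^{-x²/4}/√π] = W(-1/2, (1-n)/2 | x), where the right-hand side is given by the Wright series with 1/Γ vanishing at nonpositive integers. -/
/-!
Termwise differentiation shifts the second Wright parameter:
`(k + 1) / ((k + 1)! Γ(a (k + 1) + b)) = 1 / (k! Γ(a k + (a + b)))`, so `W(a, b)' = W(a, a + b)`.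
For `a = -1/2`, `b = 1/2` the Wright series is the Taylor series of `e^{-x²/4}/√π`: the odd
terms vanish because `Γ` has poles at `-m`, and `(2m)! Γ(1/2 - m) = (-4)^m m! √π` matches the
even ones with the exponential series. Iterating the shift gives `b = (1 - n)/2`. No estimate on
`1/Γ` is needed: a power series converging on the whole line may be differentiated termwise, and
its derived series again converges on the whole line.
-/

open scoped Nat
open Real

section PowerSeries

variable {𝕜 : Type*} [RCLike 𝕜] {c : ℕ → 𝕜}

theorem summable_nat_mul_norm_mul_pow (hc : ∀ r, Summable fun k => c k * r ^ k) (R : 𝕜) :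
    Summable fun k : ℕ => (k : ℝ) * ‖c k * R ^ k‖ := by
  set r : 𝕜 := ‖R‖ + 1
  have hr : ‖r‖ = ‖R‖ + 1 := by
    simp only [r]; norm_cast; exact abs_of_nonneg (by positivity)
  have hr0 : ‖r‖ ≠ 0 := by rw [hr]; positivity
  obtain ⟨C, hC⟩ := (hc r).tendsto_atTop_zero.norm.bddAbove_range
  set q := ‖R‖ / ‖r‖
  have hq : ‖q‖ < 1 := by
    rw [Real.norm_of_nonneg (by positivity), div_lt_one (by rw [hr]; positivity), hr]
    linarith
  refine Summable.of_nonneg_of_le (fun k => by positivity) (fun k => ?_)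
    ((summable_pow_mul_geometric_of_norm_lt_one 1 hq).mul_left C)
  have hCk : ‖c k * r ^ k‖ ≤ C := hC ⟨k, rfl⟩
  calc (k : ℝ) * ‖c k * R ^ k‖ = ‖c k * r ^ k‖ * ((k : ℝ) * q ^ k) := by
        simp only [norm_mul, norm_pow, q, div_pow]
        field_simp
    _ ≤ C * ((k : ℝ) ^ 1 * q ^ k) := by rw [pow_one]; gcongr

theorem summable_succ_mul_succ_mul_pow (hc : ∀ r, Summable fun k => c k * r ^ k) (r : 𝕜) :
    Summable fun k : ℕ => (k + 1) * c (k + 1) * r ^ k := by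
  set R : 𝕜 := ‖r‖ + 1
  have hR : ‖R‖ = ‖r‖ + 1 := by
    simp only [R]; norm_cast; exact abs_of_nonneg (by positivity)
  refine Summable.of_norm_bounded
    ((summable_nat_add_iff 1).mpr (summable_nat_mul_norm_mul_pow hc R)) fun k => ?_
  have hrR : ‖r‖ ^ k ≤ ‖R‖ ^ (k + 1) :=
    (pow_le_pow_left₀ (norm_nonneg r) (by rw [hR]; linarith) k).trans
      (pow_le_pow_right₀ (by rw [hR]; linarith [norm_nonneg r]) k.le_succ)
  have hk : ‖((k : 𝕜) + 1)‖ = (k : ℝ) + 1 := by norm_cast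
  simp only [norm_mul, norm_pow, hk, Nat.cast_add, Nat.cast_one, mul_assoc]
  gcongr

theorem hasDerivAt_tsum_mul_pow (hc : ∀ r, Summable fun k => c k * r ^ k) (x : 𝕜) :
    HasDerivAt (fun y => ∑' k, c k * y ^ k) (∑' k : ℕ, (k + 1) * c (k + 1) * x ^ k) x := by
  set R : ℝ := ‖x‖ + 1
  have hx : x ∈ Metric.ball (0 : 𝕜) R := by simp [R]
  have hbound : ∀ (k : ℕ), ∀ y ∈ Metric.ball (0 : 𝕜) R,
      ‖c k * (k * y ^ (k - 1))‖ ≤ (k : ℝ) * ‖c k * (R : 𝕜) ^ k‖ := by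
    intro k y hy
    have hR : ‖(R : 𝕜)‖ = R := by
      simp only [RCLike.norm_ofReal]; exact abs_of_nonneg (by positivity)
    have hyR : ‖y‖ ^ (k - 1) ≤ R ^ k :=
      (pow_le_pow_left₀ (norm_nonneg y) (mem_ball_zero_iff.mp hy).le _).trans
        (pow_le_pow_right₀ (by simp [R]) (Nat.sub_le k 1))
    simp only [norm_mul, norm_pow, RCLike.norm_natCast, hR]
    calc ‖c k‖ * ((k : ℝ) * ‖y‖ ^ (k - 1)) ≤ ‖c k‖ * ((k : ℝ) * R ^ k) := by gcongr
      _ = _ := by ring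
  have hderiv := hasDerivAt_tsum_of_isPreconnected (summable_nat_mul_norm_mul_pow hc R)
    Metric.isOpen_ball (convex_ball (0 : 𝕜) R).isPreconnected
    (fun k y _ => (hasDerivAt_pow k y).const_mul (c k)) hbound hx (hc x) hx
  have hsum : Summable fun k : ℕ => c k * (k * x ^ (k - 1)) :=
    .of_norm_bounded (summable_nat_mul_norm_mul_pow hc R) fun k => hbound k x hx
  refine hderiv.congr_deriv ?_
  rw [hsum.tsum_eq_zero_add]
  simp only [Nat.cast_zero, zero_mul, mul_zero, zero_add, Nat.add_sub_cancel, Nat.cast_add,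
    Nat.cast_one]
  exact tsum_congr fun k => by ring

end PowerSeries

theorem Real.factorial_mul_Gamma_one_half_sub_nat (m : ℕ) :
    ((2 * m)! : ℝ) * Gamma (1 / 2 - m) = (-4) ^ m * m ! * √π := by
  induction m with
  | zero => simpa using Real.Gamma_one_half_eq
  | succ m ih =>
    have hstep : Gamma (1 / 2 - m) = (1 / 2 - (m + 1)) * Gamma (1 / 2 - (m + 1)) := by
      rw [← Real.Gamma_add_one (by linarith [(m.cast_nonneg : (0 : ℝ) ≤ m)])]
      ring_nf
    rw [show 2 * (m + 1) = 2 * m + 1 + 1 by ring, Nat.factorial_succ, Nat.factorial_succ,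
      Nat.factorial_succ]
    push_cast
    linear_combination (-4 * (m + 1 : ℝ)) * ih + (4 * (m + 1 : ℝ) * (2 * m)!) * hstep

/-- `Real.Gamma` vanishes at the nonpositive integers, so the corresponding coefficients are `0`,
as in the convention for `W(a, b | x)`. -/
noncomputable def wrightCoeff (a b : ℝ) (k : ℕ) : ℝ := ((k ! : ℝ) * Gamma (a * k + b))⁻¹

noncomputable def wright (a b x : ℝ) : ℝ := ∑' k, wrightCoeff a b k * x ^ k

theorem succ_mul_wrightCoeff_succ (a b : ℝ) (k : ℕ) :
    (k + 1) * wrightCoeff a b (k + 1) = wrightCoeff a (a + b) k := by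
  have hk : (k + 1 : ℝ) ≠ 0 := by positivity
  rw [wrightCoeff, wrightCoeff, Nat.factorial_succ, Nat.cast_mul, Nat.cast_succ, mul_assoc,
    mul_inv, mul_inv_cancel_left₀ hk]
  ring_nf

section Wright

variable {a b : ℝ}

theorem summable_wrightCoeff_add (h : ∀ r, Summable fun k => wrightCoeff a b k * r ^ k)
    (r : ℝ) : Summable fun k => wrightCoeff a (a + b) k * r ^ k := by
  simpa only [succ_mul_wrightCoeff_succ] using summable_succ_mul_succ_mul_pow h r

theorem hasDerivAt_wright (h : ∀ r, Summable fun k => wrightCoeff a b k * r ^ k) (x : ℝ) :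
    HasDerivAt (wright a b) (wright a (a + b) x) x := by
  unfold wright
  simpa only [succ_mul_wrightCoeff_succ] using hasDerivAt_tsum_mul_pow h x

end Wright

theorem hasSum_wright_neg_half_half (x : ℝ) :
    HasSum (fun k => wrightCoeff (-(1 / 2)) (1 / 2) k * x ^ k) (Real.exp (-x ^ 2 / 4) / √π) := by
  have hodd : ∀ k ∉ Set.range (2 * ·), wrightCoeff (-(1 / 2)) (1 / 2) k * x ^ k = 0 := by
    intro k hk
    obtain ⟨m, rfl⟩ : Odd k :=
      Nat.not_even_iff_odd.mp fun ⟨m, hm⟩ => hk ⟨m, show 2 * m = k by omega⟩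
    have harg : -(1 / 2) * ((2 * m + 1 : ℕ) : ℝ) + 1 / 2 = -m := by push_cast; ring
    rw [wrightCoeff, harg, Real.Gamma_neg_nat_eq_zero, mul_zero, inv_zero, zero_mul]
  refine (Function.Injective.hasSum_iff (mul_right_injective₀ two_ne_zero) hodd).mp ?_
  have hexp := (NormedSpace.expSeries_div_hasSum_exp (-x ^ 2 / 4)).div_const √π
  rw [← Real.exp_eq_exp_ℝ] at hexp
  refine hexp.congr_fun fun m => ?_
  have harg : -(1 / 2) * ((2 * m : ℕ) : ℝ) + 1 / 2 = 1 / 2 - m := by push_cast; ring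
  simp only [Function.comp_apply, wrightCoeff, harg, Real.factorial_mul_Gamma_one_half_sub_nat]
  rw [pow_mul, div_pow]
  field_simp
  rw [← mul_pow, ← mul_pow]
  ring

theorem iteratedDeriv_gaussian_eq_wright (n : ℕ) :
    (∀ r, Summable fun k => wrightCoeff (-(1 / 2)) ((1 - n) / 2) k * r ^ k) ∧
      iteratedDeriv n (fun t => Real.exp (-t ^ 2 / 4) / √π) = wright (-(1 / 2)) ((1 - n) / 2) := by
  induction n with
  | zero =>
    simp only [CharP.cast_eq_zero, sub_zero, iteratedDeriv_zero]
    exact ⟨fun r => (hasSum_wright_neg_half_half r).summable,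
      funext fun x => (hasSum_wright_neg_half_half x).tsum_eq.symm⟩
  | succ n ih =>
    obtain ⟨hsum, hderiv⟩ := ih
    have hb : -(1 / 2) + (1 - n) / 2 = (1 - ((n + 1 : ℕ) : ℝ)) / 2 := by push_cast; ring
    rw [← hb, iteratedDeriv_succ, hderiv]
    exact ⟨summable_wrightCoeff_add hsum, funext fun x => (hasDerivAt_wright hsum x).deriv⟩

/-- The `n`-th derivative of the normalized Gaussian is a Wright function:
`(d/dx)ⁿ [e^{-x²/4}/√π] = W(-1/2, (1-n)/2 | x)` for every `n : ℕ` and real `x`.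
(Mathlib's `Real.Gamma` vanishes at the nonpositive integers, so division by it
implements the convention that such terms of the Wright series vanish.) -/
theorem gaussian_deriv_eq_wright (n : ℕ) (x : ℝ) :
    iteratedDeriv n (fun t : ℝ => Real.exp (-t ^ 2 / 4) / Real.sqrt Real.pi) x
      = ∑' k : ℕ, x ^ k /
          ((k.factorial : ℝ) * Real.Gamma (-(1 / 2) * k + (1 - n) / 2)) := by
  rw [(iteratedDeriv_gaussian_eq_wright n).2, wright]
  simp only [wrightCoeff, div_eq_inv_mul]
end

section
/- For a < 0 with a > -1, b < 1, and real z, the radial integrand r ↦ r^{-b} e^{cos(πa) z r^{-a} − r} sin(sin(πa) z r^{-a} + πb) is integrable on (0, ∞); in particular the singularity at r = 0 is integrable since -a > 0 makes z r^{-a} → 0 and r^{-b} is integrable near 0 for b < 1. -/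
set_option autoImplicit false

open MeasureTheory

/-- For `-1 < a < 0`, `b < 1` and real `z`, the radial integrand
`r ↦ r^{-b} e^{cos(πa) z r^{-a} − r} sin(sin(πa) z r^{-a} + πb)` of the real
integral representation of the Wright function is integrable on all of
`(0, ∞)`: the singularity at `r = 0` is integrable. -/
theorem wright_radial_integrand_integrable_zero (a b z : ℝ)
    (ha : -1 < a) (ha' : a < 0) (hb : b < 1) :
    IntegrableOn (fun r : ℝ =>
        r ^ (-b) * Real.exp (Real.cos (Real.pi * a) * z * r ^ (-a) - r) *
          Real.sin (Real.sin (Real.pi * a) * z * r ^ (-a) + Real.pi * b))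
      (Set.Ioi 0) := by
  have hq : (0:ℝ) ≤ -a := by linarith
  set g : ℝ → ℝ := fun r =>
    Real.exp (Real.cos (Real.pi * a) * z * r ^ (-a) - r) *
      Real.sin (Real.sin (Real.pi * a) * z * r ^ (-a) + Real.pi * b) with hg_def
  -- continuity of g on all of ℝ
  have hrp : Continuous fun r : ℝ => r ^ (-a) := Real.continuous_rpow_const hq
  have hg : Continuous g := by
    apply Continuous.mul
    · exact Real.continuous_exp.comp ((continuous_const.mul hrp).sub continuous_id)
    · exact Real.continuous_sin.comp ((continuous_const.mul hrp).add continuous_const)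
  have hfc : LocallyIntegrableOn g (Set.Ioi 0) :=
    (hg.locallyIntegrable).locallyIntegrableOn _
  -- behaviour at infinity
  set C : ℝ := |Real.cos (Real.pi * a) * z| with hC_def
  have h1 : Filter.Tendsto (fun x : ℝ => C * x ^ (-(a + 1))) Filter.atTop (nhds (C * 0)) :=
    (tendsto_rpow_neg_atTop (by linarith)).const_mul C
  have h2 : ∀ᶠ x : ℝ in Filter.atTop, C * x ^ (-(a + 1)) < 1 / 2 := by
    apply h1.eventually_lt_const
    simp
  have hgexp : g =O[Filter.atTop] fun x : ℝ => Real.exp (-(1/2) * x) := by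
    apply Asymptotics.IsBigO.of_bound 1
    filter_upwards [h2, Filter.eventually_gt_atTop (0:ℝ)] with x hx hx0
    have hxpow : x ^ (-a) = x ^ (-(a+1)) * x := by
      rw [← Real.rpow_add_one hx0.ne']
      ring_nf
    have hbound : Real.cos (Real.pi * a) * z * x ^ (-a) ≤ (1/2) * x := by
      calc Real.cos (Real.pi * a) * z * x ^ (-a) ≤ C * x ^ (-a) := by
            apply mul_le_mul_of_nonneg_right (le_abs_self _)
              (Real.rpow_nonneg hx0.le _)
          _ = C * x ^ (-(a+1)) * x := by rw [hxpow]; ring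
          _ ≤ (1/2) * x := mul_le_mul_of_nonneg_right hx.le hx0.le
    have : |g x| ≤ Real.exp (-(1/2) * x) := by
      rw [hg_def]
      calc |Real.exp (Real.cos (Real.pi * a) * z * x ^ (-a) - x) *
              Real.sin (Real.sin (Real.pi * a) * z * x ^ (-a) + Real.pi * b)|
          ≤ Real.exp (Real.cos (Real.pi * a) * z * x ^ (-a) - x) * 1 := by
            rw [abs_mul, abs_of_pos (Real.exp_pos _)]
            exact mul_le_mul_of_nonneg_left (abs_le.mpr ⟨Real.neg_one_le_sin _, Real.sin_le_one _⟩) (Real.exp_pos _).le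
        _ = Real.exp (Real.cos (Real.pi * a) * z * x ^ (-a) - x) := mul_one _
        _ ≤ Real.exp (-(1/2) * x) := by
            apply Real.exp_le_exp.2
            linarith
    simpa [abs_of_pos (Real.exp_pos (-(1/2) * x))] using this
  have hf_top : g =O[Filter.atTop] fun x : ℝ => x ^ (-(2 - b)) :=
    hgexp.trans (isLittleO_exp_neg_mul_rpow_atTop (by norm_num : (0:ℝ) < 1/2) _).isBigO
  -- behaviour at zero
  have hf_bot : g =O[nhdsWithin 0 (Set.Ioi 0)] fun x : ℝ => x ^ (-(0:ℝ)) := by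
    have : Filter.Tendsto g (nhdsWithin 0 (Set.Ioi 0)) (nhds (g 0)) :=
      (hg.tendsto 0).mono_left nhdsWithin_le_nhds
    have hO : g =O[nhdsWithin 0 (Set.Ioi 0)] (fun _ : ℝ => (1:ℝ)) := this.isBigO_one ℝ
    simpa [Real.rpow_zero] using hO
  have key := mellin_convergent_of_isBigO_scalar hfc hf_top
    (by linarith : (1:ℝ) - b < 2 - b) hf_bot (by linarith : (0:ℝ) < 1 - b)
  have e : (1:ℝ) - b - 1 = -b := by ring
  rw [e] at key
  exact key.congr_fun (fun t _ => (mul_assoc _ _ _).symm) measurableSet_Ioi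
end
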